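/- Let 1 ≤ p ≤ q ≤ ∞. Let μ be a measure on ℤ (plus a point ∞ of measure 0) with μ({n}) = 2^{−(n+1)} for n ≥ 0 and μ({n}) = 2^{−(n+1)} ≥ 1 for n < 0. Define for f the norm ‖f‖* = (‖f·1_{n<0}‖_{L^q(μ)}^q + ‖f·1_{n≥0}‖_{L^p(μ)}^q)^{1/q} (max of the two pieces when q = ∞). Then ‖f‖* < ∞ if and only if f ∈ L^p(μ) + L^q(μ). -/

import Mathlib

open MeasureTheory

/-- The Haar measure of Spector's countable non-compact hypergroup `H`,
viewed on `ℤ` (the identity `∞` has measure `0`): `μ({n}) = 2^{−(n+1)}`. -/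
noncomputable def muH : Measure ℤ :=
  Measure.sum fun n : ℤ => ((2 : ENNReal) ^ (-((n : ℝ) + 1))) • Measure.dirac n

/-- The amalgam norm `‖f‖* = (‖f·1_{n<0}‖_{L^q}^q + ‖f·1_{n≥0}‖_{L^p}^q)^{1/q}`
(maximum of the two pieces when `q = ∞`). -/
noncomputable def starNorm (p q : ENNReal) (f : ℤ → ℝ) : ENNReal :=
  if q = ⊤ then
    max (eLpNorm (Set.indicator {n : ℤ | n < 0} f) ⊤ muH)
      (eLpNorm (Set.indicator {n : ℤ | 0 ≤ n} f) p muH)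
  else
    ((eLpNorm (Set.indicator {n : ℤ | n < 0} f) q muH) ^ q.toReal +
        (eLpNorm (Set.indicator {n : ℤ | 0 ≤ n} f) p muH) ^ q.toReal) ^ (1 / q.toReal)

/-! On the nonnegative integers `muH` has total mass `1`, so there `L^q ⊆ L^p`. Every negative
integer is an atom of mass `≥ 1`, so an `L^p` function supported on the negative integers is
bounded by its `L^p` norm, and `L^p ∩ L^∞ ⊆ L^q`. Hence `f = f·1_{n≥0} + f·1_{n<0}` splits a
function of finite amalgam norm, and conversely each piece of `g + h` lands in the right space. -/

open ENNReal

namespace MeasureTheory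

variable {α E : Type*} {m : MeasurableSpace α} {μ : Measure α} [NormedAddCommGroup E]
  {p q : ℝ≥0∞} {f : α → E}

theorem MemLp.of_exponent_le_of_memLp_top (hf : MemLp f p μ) (hf_top : MemLp f ∞ μ)
    (hp : p ≠ 0) (hpq : p ≤ q) : MemLp f q μ := by
  rcases eq_or_ne q ∞ with rfl | hq
  · exact hf_top
  have hp_top : p ≠ ∞ := ne_top_of_le_ne_top hq hpq
  have hq0 : q ≠ 0 := (pos_of_ne_zero hp |>.trans_le hpq).ne'
  have hpq' : p.toReal ≤ q.toReal := toReal_mono hq hpq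
  set C := eLpNorm f ∞ μ
  refine ⟨hf.1, (eLpNorm_lt_top_iff_lintegral_rpow_enorm_lt_top hq0 hq).2 ?_⟩
  calc ∫⁻ x, ‖f x‖ₑ ^ q.toReal ∂μ
      ≤ ∫⁻ x, ‖f x‖ₑ ^ p.toReal * C ^ (q.toReal - p.toReal) ∂μ := by
        refine lintegral_mono_ae ?_
        filter_upwards [enorm_ae_le_eLpNormEssSup f μ] with x hx
        calc ‖f x‖ₑ ^ q.toReal
            = ‖f x‖ₑ ^ p.toReal * ‖f x‖ₑ ^ (q.toReal - p.toReal) := by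
              rw [← rpow_add_of_nonneg _ _ toReal_nonneg (sub_nonneg.2 hpq'), add_sub_cancel]
          _ ≤ ‖f x‖ₑ ^ p.toReal * C ^ (q.toReal - p.toReal) := by
              gcongr
              exact hx.trans_eq eLpNorm_exponent_top.symm
    _ = (∫⁻ x, ‖f x‖ₑ ^ p.toReal ∂μ) * C ^ (q.toReal - p.toReal) :=
        lintegral_mul_const' _ _ (rpow_ne_top_of_nonneg (sub_nonneg.2 hpq') hf_top.2.ne)
    _ < ∞ := mul_lt_top (lintegral_rpow_enorm_lt_top_of_eLpNorm_lt_top hp hp_top hf.2)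
        (rpow_lt_top_of_nonneg (sub_nonneg.2 hpq') hf_top.2.ne)

variable [MeasurableSingletonClass α]

theorem enorm_le_eLpNorm_of_one_le_measure_singleton (hp : p ≠ 0) {x : α}
    (hx : 1 ≤ μ {x}) : ‖f x‖ₑ ≤ eLpNorm f p μ := by
  have h1 : 1 ≤ μ {x} ^ (1 / p.toReal) := by
    simpa using rpow_le_rpow hx (z := 1 / p.toReal) (by positivity)
  have h2 : Set.indicator {x} (fun _ => f x) = Set.indicator {x} f := by
    ext y
    by_cases hy : y = x <;> simp [hy]
  calc ‖f x‖ₑ ≤ ‖f x‖ₑ * μ {x} ^ (1 / p.toReal) := le_mul_of_one_le_right' h1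
    _ = eLpNorm (Set.indicator {x} f) p μ := by
        rw [← h2, eLpNorm_indicator_const' (measurableSet_singleton x) (one_pos.trans_le hx).ne' hp]
    _ ≤ eLpNorm f p μ := eLpNorm_indicator_le f

theorem MemLp.of_exponent_le_of_one_le_measure_singleton (hf : MemLp f p μ) (hp : p ≠ 0)
    (hpq : p ≤ q) (hμ : ∀ x, f x ≠ 0 → 1 ≤ μ {x}) : MemLp f q μ := by
  refine hf.of_exponent_le_of_memLp_top ⟨hf.1, ?_⟩ hp hpq
  rw [eLpNorm_exponent_top]
  refine (eLpNormEssSup_le_of_ae_enorm_bound (.of_forall fun x => ?_)).trans_lt hf.2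
  by_cases hx : f x = 0
  · simp [hx]
  · exact enorm_le_eLpNorm_of_one_le_measure_singleton hp (hμ x hx)

theorem memLp_iff_eLpNorm_lt_top_of_countable [Countable α] :
    MemLp f p μ ↔ eLpNorm f p μ < ∞ :=
  ⟨MemLp.eLpNorm_lt_top, fun h => ⟨.of_discrete, h⟩⟩

end MeasureTheory

theorem muH_singleton (n : ℤ) : muH {n} = 2 ^ (-((n : ℝ) + 1)) := by
  rw [muH, Measure.sum_apply _ (measurableSet_singleton n)]
  simp [Measure.dirac_apply', Set.indicator_apply]

theorem one_le_muH_singleton {n : ℤ} (hn : n < 0) : 1 ≤ muH {n} := by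
  have : (n : ℝ) ≤ -1 := by exact_mod_cast Int.le_sub_one_of_lt hn
  rw [muH_singleton]
  exact (one_rpow _).symm.le.trans (rpow_le_rpow one_le_two (by linarith))

theorem muH_setOf_nonneg : muH {n : ℤ | 0 ≤ n} = 1 := by
  have hU : {n : ℤ | 0 ≤ n} = ⋃ k : ℕ, {(k : ℤ)} := by
    ext n
    simp
  have hw (k : ℕ) : muH {(k : ℤ)} = 2⁻¹ * 2⁻¹ ^ k := by
    rw [muH_singleton, neg_add', rpow_sub _ _ two_ne_zero ofNat_ne_top]
    simp [rpow_neg, ENNReal.inv_pow, div_eq_mul_inv, mul_comm]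
  rw [hU, measure_iUnion (fun i j hij => by simpa using hij) (fun _ => measurableSet_singleton _)]
  simp only [hw, ENNReal.tsum_mul_left, ENNReal.tsum_geometric, one_sub_inv_two, inv_inv]
  exact ENNReal.inv_mul_cancel two_ne_zero ofNat_ne_top

theorem starNorm_lt_top_iff {p q : ℝ≥0∞} (hq : q ≠ 0) (f : ℤ → ℝ) :
    starNorm p q f < ∞ ↔
      eLpNorm ({n : ℤ | n < 0}.indicator f) q muH < ∞ ∧
        eLpNorm ({n : ℤ | 0 ≤ n}.indicator f) p muH < ∞ := by
  unfold starNorm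
  split_ifs with hq_top
  · rw [hq_top, max_lt_iff]
  · have hq_pos : 0 < q.toReal := toReal_pos hq hq_top
    rw [rpow_lt_top_iff_of_pos (one_div_pos.2 hq_pos), add_lt_top,
      rpow_lt_top_iff_of_pos hq_pos, rpow_lt_top_iff_of_pos hq_pos]

/-- For `1 ≤ p ≤ q ≤ ∞`, a function has finite amalgam norm `‖f‖*` if and only
if it belongs to `L^p(μ) + L^q(μ)`. -/
theorem stmt16 (p q : ENNReal) (hp : 1 ≤ p) (hpq : p ≤ q) (f : ℤ → ℝ) :
    starNorm p q f < ⊤ ↔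
      ∃ g h : ℤ → ℝ, f = g + h ∧ eLpNorm g p muH < ⊤ ∧ eLpNorm h q muH < ⊤ := by
  have hp0 : p ≠ 0 := (one_pos.trans_le hp).ne'
  have hneg : {n : ℤ | n < 0} = {n : ℤ | 0 ≤ n}ᶜ := by ext; simp
  simp only [starNorm_lt_top_iff (ne_bot_of_le_ne_bot hp0 hpq), ← memLp_iff_eLpNorm_lt_top_of_countable,
    hneg]
  constructor
  · rintro ⟨hf_neg, hf_nonneg⟩
    exact ⟨_, _, (Set.indicator_self_add_compl _ f).symm, hf_nonneg, hf_neg⟩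
  · rintro ⟨g, h, rfl, hg, hh⟩
    simp only [Set.indicator_add']
    refine ⟨.add ?_ (hh.indicator .of_discrete), .add (hg.indicator .of_discrete) ?_⟩
    · refine (hg.indicator .of_discrete).of_exponent_le_of_one_le_measure_singleton hp0 hpq
        fun n hn => one_le_muH_singleton ?_
      exact not_le.1 (Set.mem_of_indicator_ne_zero hn)
    · exact (hh.indicator .of_discrete).mono_exponent_of_measure_support_ne_top
        (fun n hn => Set.indicator_of_notMem hn h) (muH_setOf_nonneg ▸ one_ne_top) hpq
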